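/- arXiv:2208.07100 — 3 statements merged into one kernel-verified Lean document; each statement's English description precedes it below -/
import Mathlib

section
/- Let Π be a backwards-propagating DatalogMTL program, D a dataset, and t ∈ ℚ a time point. If the projections to [t, ∞) of the least model 𝔍_D of D and of T_Π(𝔍_D) coincide (i.e., 𝔍_D|_{[t,∞)} = T_Π(𝔍_D)|_{[t,∞)}), then 𝔍_D|_{[t,∞)} = can(Π,D)|_{[t,∞)}. -/
namespace DatalogMTL

/-- An interval: a nonempty convex subset of the rational timeline. -/
structure Intvl where
  carrier : Set ℚ
  nonempty : carrier.Nonempty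
  convex : ∀ ⦃a b c : ℚ⦄, a ∈ carrier → c ∈ carrier → a ≤ b → b ≤ c → b ∈ carrier

/-- An interval containing only non-negative rationals. -/
def Intvl.Nonneg (ρ : Intvl) : Prop := ∀ t ∈ ρ.carrier, (0 : ℚ) ≤ t

/-- Intervals indexing metric operators: only non-negative rationals. -/
abbrev NNIntvl := {ρ : Intvl // ρ.Nonneg}

/-- Terms: variables or constants (both named by naturals). -/
inductive Term where
  | var (v : ℕ)
  | const (c : ℕ)

/-- A (possibly non-ground) relational atom. -/
structure Atom where
  pred : ℕ
  args : List Term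

/-- A ground relational atom. -/
structure GAtom where
  pred : ℕ
  args : List ℕ

/-- Applying a substitution (assignment of constants to variables) to a term. -/
def Term.subst (σ : ℕ → ℕ) : Term → ℕ
  | Term.var v => σ v
  | Term.const c => c

/-- Applying a substitution to a relational atom, producing a ground atom. -/
def Atom.subst (σ : ℕ → ℕ) (A : Atom) : GAtom := ⟨A.pred, A.args.map (Term.subst σ)⟩

/-- Metric atoms over atoms of type `α`. -/
inductive MA (α : Type) where
  | top : MA α
  | bot : MA α
  | atom (A : α) : MA α
  | diaMinus (ρ : NNIntvl) (M : MA α) : MA α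
  | diaPlus (ρ : NNIntvl) (M : MA α) : MA α
  | boxMinus (ρ : NNIntvl) (M : MA α) : MA α
  | boxPlus (ρ : NNIntvl) (M : MA α) : MA α
  | since (ρ : NNIntvl) (M₁ M₂ : MA α) : MA α
  | untl (ρ : NNIntvl) (M₁ M₂ : MA α) : MA α

def MA.map {α β : Type} (g : α → β) : MA α → MA β
  | .top => .top
  | .bot => .bot
  | .atom A => .atom (g A)
  | .diaMinus ρ M => .diaMinus ρ (M.map g)
  | .diaPlus ρ M => .diaPlus ρ (M.map g)
  | .boxMinus ρ M => .boxMinus ρ (M.map g)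
  | .boxPlus ρ M => .boxPlus ρ (M.map g)
  | .since ρ M₁ M₂ => .since ρ (M₁.map g) (M₂.map g)
  | .untl ρ M₁ M₂ => .untl ρ (M₁.map g) (M₂.map g)

/-- Grounding a metric atom by a substitution. -/
def MA.subst (M : MA Atom) (σ : ℕ → ℕ) : MA GAtom := M.map (Atom.subst σ)

/-- An interpretation: for each ground relational atom and rational time point,
whether the atom holds there. -/
def Interp : Type := GAtom → ℚ → Prop

/-- Containment of interpretations. -/
def leI (I J : Interp) : Prop := ∀ A t, I A t → J A t

/-- Satisfaction of ground metric atoms at a time point. -/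
def sat (I : Interp) : ℚ → MA GAtom → Prop
  | _, .top => True
  | _, .bot => False
  | t, .atom A => I A t
  | t, .diaMinus ρ M => ∃ t', (t - t') ∈ ρ.1.carrier ∧ sat I t' M
  | t, .diaPlus ρ M => ∃ t', (t' - t) ∈ ρ.1.carrier ∧ sat I t' M
  | t, .boxMinus ρ M => ∀ t', (t - t') ∈ ρ.1.carrier → sat I t' M
  | t, .boxPlus ρ M => ∀ t', (t' - t) ∈ ρ.1.carrier → sat I t' M
  | t, .since ρ M₁ M₂ =>
      ∃ t', (t - t') ∈ ρ.1.carrier ∧ sat I t' M₂ ∧ ∀ t'', t' < t'' → t'' < t → sat I t'' M₁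
  | t, .untl ρ M₁ M₂ =>
      ∃ t', (t' - t) ∈ ρ.1.carrier ∧ sat I t' M₂ ∧ ∀ t'', t < t'' → t'' < t' → sat I t'' M₁

/-- Satisfaction of a ground metric atom throughout a set of time points. -/
def satSet (I : Interp) (M : MA GAtom) (s : Set ℚ) : Prop := ∀ t ∈ s, sat I t M

/-- Satisfaction of a ground metric atom throughout an interval. -/
def satIvl (I : Interp) (M : MA GAtom) (ρ : Intvl) : Prop := satSet I M ρ.carrier

/-- A fact `M@ρ`. -/
structure Fact where
  atom : GAtom
  ivl : Intvl

/-- The least model of a set of facts. -/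
def interpOf (F : Set Fact) : Interp := fun A t => ∃ f ∈ F, f.atom = A ∧ t ∈ f.ivl.carrier

/-- A dataset: a finite set of facts. -/
structure Dataset where
  facts : Set Fact
  finite : facts.Finite

/-- The least model `𝔍_D` of a dataset `D`. -/
def Dataset.interp (D : Dataset) : Interp := interpOf D.facts

/-- An interpretation satisfies a fact if the atom holds throughout the interval. -/
def satFact (I : Interp) (f : Fact) : Prop := satIvl I (MA.atom f.atom) f.ivl

/-- The head grammar `M' ::= ⊤ | P(s) | ■⁻ρ M' | ■⁺ρ M'`. -/
inductive HeadOK {α : Type} : MA α → Prop where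
  | top : HeadOK MA.top
  | atom (A : α) : HeadOK (MA.atom A)
  | boxMinus (ρ : NNIntvl) {M : MA α} : HeadOK M → HeadOK (MA.boxMinus ρ M)
  | boxPlus (ρ : NNIntvl) {M : MA α} : HeadOK M → HeadOK (MA.boxPlus ρ M)

/-- Variables of a relational atom. -/
def Atom.vars (A : Atom) : Set ℕ := {v | Term.var v ∈ A.args}

/-- Variables of a metric atom. -/
def MA.vars : MA Atom → Set ℕ
  | .top => ∅
  | .bot => ∅
  | .atom A => A.vars
  | .diaMinus _ M => M.vars
  | .diaPlus _ M => M.vars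
  | .boxMinus _ M => M.vars
  | .boxPlus _ M => M.vars
  | .since _ M₁ M₂ => M₁.vars ∪ M₂.vars
  | .untl _ M₁ M₂ => M₁.vars ∪ M₂.vars

/-- Variables of a metric atom occurring outside left operands of `S` and `U`. -/
def MA.safeVars : MA Atom → Set ℕ
  | .top => ∅
  | .bot => ∅
  | .atom A => A.vars
  | .diaMinus _ M => M.safeVars
  | .diaPlus _ M => M.safeVars
  | .boxMinus _ M => M.safeVars
  | .boxPlus _ M => M.safeVars
  | .since _ _ M₂ => M₂.safeVars
  | .untl _ _ M₂ => M₂.safeVars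

/-- A (safe) rule `M' ← M₁ ∧ … ∧ Mₙ`, `n ≥ 1`, with head from the head grammar. -/
structure Rule where
  head : MA Atom
  body : List (MA Atom)
  body_ne : body ≠ []
  head_ok : HeadOK head
  safe : head.vars ⊆ ⋃ M ∈ body, MA.safeVars M

/-- A program: a finite set of (safe) rules. -/
structure Program where
  rules : Set Rule
  finite : rules.Finite

/-- An interpretation satisfies a rule if it satisfies all its ground instances. -/
def modelsRule (I : Interp) (r : Rule) : Prop :=
  ∀ (σ : ℕ → ℕ) (t : ℚ), (∀ M ∈ r.body, sat I t (M.subst σ)) → sat I t (r.head.subst σ)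

def modelsProgram (I : Interp) (P : Program) : Prop := ∀ r ∈ P.rules, modelsRule I r

def modelsDataset (I : Interp) (D : Dataset) : Prop := ∀ f ∈ D.facts, satFact I f

/-- `gEntails M s A u` : every interpretation satisfying the ground metric atom `M`
throughout `s` satisfies the ground relational atom `A` throughout `u`. -/
def gEntails (M : MA GAtom) (s : Set ℚ) (A : GAtom) (u : Set ℚ) : Prop :=
  ∀ J : Interp, satSet J M s → ∀ t ∈ u, J A t

/-- The immediate consequence operator `T_Π`: the least interpretation containing `I`
and satisfying, for each ground rule instance whose body is satisfied by `I` at `t`,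
the head of the instance at `t`. -/
def TP (P : Program) (I : Interp) : Interp := fun A t' =>
  I A t' ∨ ∃ r ∈ P.rules, ∃ (σ : ℕ → ℕ) (t : ℚ),
    (∀ M ∈ r.body, sat I t (M.subst σ)) ∧ gEntails (r.head.subst σ) {t} A {t'}

/-- Finite powers of the immediate consequence operator. -/
def TPiter (P : Program) : ℕ → Interp → Interp
  | 0, I => I
  | k + 1, I => TP P (TPiter P k I)

/-- The canonical interpretation `can(Π,D) = T_Π^{ω₁}(𝔍_D)`, characterised as the least
prefixed point of the (monotone, inflationary) operator `T_Π` containing the given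
interpretation (the transfinite iteration stabilises at `ω₁` on this least fixpoint). -/
def canon (P : Program) (I : Interp) : Interp := fun A t =>
  ∀ J : Interp, leI I J → leI (TP P J) J → J A t

/-- Projection of an interpretation to a set of time points. -/
def proj (I : Interp) (s : Set ℚ) : Interp := fun A t => t ∈ s ∧ I A t

/-- Metric atoms mentioning only relational atoms and past operators `◆⁻, ■⁻, S`. -/
def MA.PastOnly {α : Type} : MA α → Prop
  | .atom _ => True
  | .diaMinus _ M => M.PastOnly
  | .boxMinus _ M => M.PastOnly
  | .since _ M₁ M₂ => M₁.PastOnly ∧ M₂.PastOnly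
  | _ => False

/-- Metric atoms mentioning only relational atoms and future operators `◆⁺, ■⁺, U`. -/
def MA.FutureOnly {α : Type} : MA α → Prop
  | .atom _ => True
  | .diaPlus _ M => M.FutureOnly
  | .boxPlus _ M => M.FutureOnly
  | .untl _ M₁ M₂ => M₁.FutureOnly ∧ M₂.FutureOnly
  | _ => False

def Rule.ForwardProp (r : Rule) : Prop :=
  (∀ M ∈ r.body, MA.PastOnly M) ∧ MA.FutureOnly r.head

def Rule.BackwardProp (r : Rule) : Prop :=
  (∀ M ∈ r.body, MA.FutureOnly M) ∧ MA.PastOnly r.head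

def Program.ForwardProp (P : Program) : Prop := ∀ r ∈ P.rules, r.ForwardProp

def Program.BackwardProp (P : Program) : Prop := ∀ r ∈ P.rules, r.BackwardProp

/-- Predicates mentioned in a metric atom. -/
def MA.apreds : MA Atom → Set ℕ
  | .top => ∅
  | .bot => ∅
  | .atom A => {A.pred}
  | .diaMinus _ M => M.apreds
  | .diaPlus _ M => M.apreds
  | .boxMinus _ M => M.apreds
  | .boxPlus _ M => M.apreds
  | .since _ M₁ M₂ => M₁.apreds ∪ M₂.apreds
  | .untl _ M₁ M₂ => M₁.apreds ∪ M₂.apreds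

def Rule.headPreds (r : Rule) : Set ℕ := r.head.apreds

def Rule.bodyPreds (r : Rule) : Set ℕ := ⋃ M ∈ r.body, MA.apreds M

/-- Edge of the dependency graph: some rule mentions `Q` in its body and `R` in its head. -/
def DepEdge (P : Program) (Q R : ℕ) : Prop :=
  ∃ r ∈ P.rules, Q ∈ r.bodyPreds ∧ R ∈ r.headPreds

/-- A predicate is recursive if the dependency graph has a path containing a cycle
and ending in it. -/
def Recursive (P : Program) (Q : ℕ) : Prop :=
  ∃ R : ℕ, Relation.TransGen (DepEdge P) R R ∧ Relation.ReflTransGen (DepEdge P) R Q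

def Program.restrict (P : Program) (p : Rule → Prop) : Program :=
  ⟨{r | r ∈ P.rules ∧ p r}, P.finite.subset (fun _ hr => hr.1)⟩

/-- The non-recursive fragment: rules whose heads mention only non-recursive predicates. -/
def Program.nrFrag (P : Program) : Program :=
  P.restrict (fun r => ∀ Q ∈ r.headPreds, ¬ Recursive P Q)

/-- The recursive fragment: the remaining rules. -/
def Program.recFrag (P : Program) : Program :=
  P.restrict (fun r => ¬ ∀ Q ∈ r.headPreds, ¬ Recursive P Q)

/-- Removing a single rule from a program. -/
def Program.erase (P : Program) (r : Rule) : Program := P.restrict (fun r' => r' ≠ r)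

/-- `ρ` is a subset-maximal interval on which `I` satisfies `M`. -/
def MaximalSat (I : Interp) (M : MA GAtom) (ρ : Intvl) : Prop :=
  satIvl I M ρ ∧ ∀ ρ' : Intvl, ρ.carrier ⊆ ρ'.carrier → satIvl I M ρ' → ρ'.carrier = ρ.carrier

/-- The single relational atom occurring in a head-shaped metric atom (if any). -/
def MA.headAtom {α : Type} : MA α → Option α
  | .atom A => some A
  | .boxMinus _ M => M.headAtom
  | .boxPlus _ M => M.headAtom
  | _ => none

/-- The set `r[F]` of facts derived by rule `r` from the facts `F` (Definition 1). -/
def Rule.derive (r : Rule) (F : Set Fact) : Set Fact :=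
  { f | ∃ (σ : ℕ → ℕ) (ρs : Fin r.body.length → Intvl),
      (∀ i : Fin r.body.length, MaximalSat (interpOf F) ((r.body.get i).subst σ) (ρs i)) ∧
      (r.head.subst σ).headAtom = some f.atom ∧
      gEntails (r.head.subst σ) (⋂ i, (ρs i).carrier) f.atom f.ivl.carrier ∧
      ∀ ρ' : Intvl, f.ivl.carrier ⊆ ρ'.carrier →
        gEntails (r.head.subst σ) (⋂ i, (ρs i).carrier) f.atom ρ'.carrier →
        ρ'.carrier = f.ivl.carrier }

/-- The set `Π[F]` of facts derived from `F` by one-step application of `Π`. -/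
def Program.derive (P : Program) (F : Set Fact) : Set Fact := ⋃ r ∈ P.rules, Rule.derive r F

/-- The coalescing `F₁ ⋓ F₂`: all facts `M@ρ` such that the least model of `F₁ ∪ F₂`
satisfies `M@ρ` but no `M@ρ'` for an interval `ρ'` strictly containing `ρ`. -/
def coalesce (F₁ F₂ : Set Fact) : Set Fact :=
  { f | satIvl (interpOf (F₁ ∪ F₂)) (MA.atom f.atom) f.ivl ∧
        ∀ ρ' : Intvl, f.ivl.carrier ⊂ ρ'.carrier →
          ¬ satIvl (interpOf (F₁ ∪ F₂)) (MA.atom f.atom) ρ' }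

lemma pastOnly_map {α β : Type} (g : α → β) {M : MA α} (h : M.PastOnly) :
    (M.map g).PastOnly := by
  induction M <;> simp_all [MA.PastOnly, MA.map]

lemma futureOnly_map {α β : Type} (g : α → β) {M : MA α} (h : M.FutureOnly) :
    (M.map g).FutureOnly := by
  induction M <;> simp_all [MA.FutureOnly, MA.map]

/-- A past-only metric atom is satisfied at `u < s` by the interpretation that is
everywhere true except for atom `A` at time `s`. -/
lemma sat_avoid {A : GAtom} {s : ℚ} :
    ∀ {M : MA GAtom}, M.PastOnly → ∀ u, u < s →
      sat (fun B v => ¬(B = A ∧ v = s)) u M := by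
  intro M
  induction M with
  | top => exact fun hp => hp.elim
  | bot => exact fun hp => hp.elim
  | diaPlus ρ M ih => exact fun hp => hp.elim
  | boxPlus ρ M ih => exact fun hp => hp.elim
  | untl ρ M₁ M₂ ih₁ ih₂ => exact fun hp => hp.elim
  | atom B =>
      intro _ u hu
      simp only [sat]
      rintro ⟨_, rfl⟩
      exact absurd hu (lt_irrefl _)
  | diaMinus ρ M ih =>
      intro hp u hu
      obtain ⟨x, hx⟩ := ρ.1.nonempty
      have hx0 := ρ.2 x hx
      exact ⟨u - x, by simpa using hx, ih hp _ (by linarith)⟩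
  | boxMinus ρ M ih =>
      intro hp u hu t' ht'
      have := ρ.2 _ ht'
      exact ih hp t' (by linarith)
  | since ρ M₁ M₂ ih₁ ih₂ =>
      intro hp u hu
      obtain ⟨x, hx⟩ := ρ.1.nonempty
      have hx0 := ρ.2 x hx
      exact ⟨u - x, by simpa using hx, ih₂ hp.2 _ (by linarith),
        fun t'' h1 h2 => ih₁ hp.1 _ (by linarith)⟩

/-- Satisfaction of a future-only metric atom at time `u ≥ t` is monotone along
containment of interpretations restricted to `[t, ∞)`. -/
lemma sat_future_mono {I I' : Interp} {t : ℚ}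
    (hII : ∀ B u, t ≤ u → I B u → I' B u) :
    ∀ {M : MA GAtom}, M.FutureOnly → ∀ u, t ≤ u → sat I u M → sat I' u M := by
  intro M
  induction M with
  | top => exact fun hf => hf.elim
  | bot => exact fun hf => hf.elim
  | diaMinus ρ M ih => exact fun hf => hf.elim
  | boxMinus ρ M ih => exact fun hf => hf.elim
  | since ρ M₁ M₂ ih₁ ih₂ => exact fun hf => hf.elim
  | atom B => exact fun _ u hu hs => hII B u hu hs
  | diaPlus ρ M ih =>
      rintro hf u hu ⟨t', ht', hs⟩
      have := ρ.2 _ ht'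
      exact ⟨t', ht', ih hf t' (by linarith) hs⟩
  | boxPlus ρ M ih =>
      intro hf u hu hs t' ht'
      have := ρ.2 _ ht'
      exact ih hf t' (by linarith) (hs t' ht')
  | untl ρ M₁ M₂ ih₁ ih₂ =>
      rintro hf u hu ⟨t', ht', hs, hall⟩
      have := ρ.2 _ ht'
      exact ⟨t', ht', ih₂ hf.2 t' (by linarith) hs,
        fun t'' h1 h2 => ih₁ hf.1 t'' (by linarith) (hall t'' h1 h2)⟩

/-- for a backwards-propagating program, if the least model of `D`
and its image under `T_Π` coincide on `[t, ∞)`, then the least model of `D` coincides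
with the canonical interpretation `can(Π,D)` on `[t, ∞)`. -/
theorem backward_projection_fixpoint (P : Program) (D : Dataset) (t : ℚ)
    (hbp : P.BackwardProp)
    (h : proj D.interp (Set.Ici t) = proj (TP P D.interp) (Set.Ici t)) :
    proj D.interp (Set.Ici t) = proj (canon P D.interp) (Set.Ici t) := by
  funext A s
  apply propext
  constructor
  · rintro ⟨hs, hD⟩
    exact ⟨hs, fun J hJ _ => hJ A s hD⟩
  · rintro ⟨hs, hc⟩
    refine ⟨hs, ?_⟩
    -- The witnessing prefixed point: everything below `t`, `𝔍_D` on `[t,∞)`.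
    set J : Interp := fun B u => u < t ∨ D.interp B u with hJdef
    have hle : leI D.interp J := fun B u h' => Or.inr h'
    have hpref : leI (TP P J) J := by
      rintro B u (h' | ⟨r, hr, σ, t₀, hbody, hent⟩)
      · exact h'
      by_cases hut : u < t
      · exact Or.inl hut
      push_neg at hut
      have hPast : (r.head.subst σ).PastOnly := pastOnly_map _ (hbp r hr).2
      -- The head is past-only, so `u ≤ t₀`.
      have hut0 : u ≤ t₀ := by
        by_contra hlt
        push_neg at hlt
        have hbad := hent (fun B' v => ¬(B' = B ∧ v = u))
          (by
            intro x hx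
            have : x = t₀ := hx
            subst this
            exact sat_avoid hPast x hlt) u rfl
        exact hbad ⟨rfl, rfl⟩
      have ht0 : t ≤ t₀ := le_trans hut hut0
      -- The body is future-only, hence satisfied already by `𝔍_D` at `t₀`.
      have hagree : ∀ B' v, t ≤ v → J B' v → D.interp B' v := by
        rintro B' v hv (h' | h')
        · exact absurd hv (not_le.mpr h')
        · exact h'
      have hbody' : ∀ M ∈ r.body, sat D.interp t₀ (M.subst σ) := fun M hM =>
        sat_future_mono hagree (futureOnly_map _ ((hbp r hr).1 M hM)) t₀ ht0 (hbody M hM)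
      have hTP : TP P D.interp B u := Or.inr ⟨r, hr, σ, t₀, hbody', hent⟩
      have heq := congrFun (congrFun h B) u
      have hDu : D.interp B u :=
        (heq ▸ (⟨hut, hTP⟩ : proj (TP P D.interp) (Set.Ici t) B u) :
          proj D.interp (Set.Ici t) B u).2
      exact Or.inr hDu
    rcases hc J hle hpref with h' | h'
    · exact absurd hs (not_le.mpr h')
    · exact h'

end DatalogMTL
end

section
/- Let Π be a DatalogMTL program, D a dataset, and E a dataset such that 𝔍_D ⊆ 𝔍_E ⊆ can(Π,D) and can(Π_nr, D) ⊆ 𝔍_E, where Π_nr is the non-recursive fragment of Π. Let r ∈ Π be a rule having a body atom M all of whose predicates are non-recursive in Π, and suppose that 𝔍_E does not satisfy Mσ at any time point t for any substitution σ grounding M. Then can(Π, E) = can(Π \ {r}, E); that is, deleting r does not change the canonical interpretation (the semantic content of Lemma 3 for rules removed in Line 10 of the optimised seminaïve procedure). -/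
namespace DatalogMTL

/-! ### Auxiliary lemmas -/

/-- Predicates mentioned in a ground metric atom. -/
def MA.gapreds : MA GAtom → Set ℕ
  | .top => ∅
  | .bot => ∅
  | .atom A => {A.pred}
  | .diaMinus _ M => M.gapreds
  | .diaPlus _ M => M.gapreds
  | .boxMinus _ M => M.gapreds
  | .boxPlus _ M => M.gapreds
  | .since _ M₁ M₂ => M₁.gapreds ∪ M₂.gapreds
  | .untl _ M₁ M₂ => M₁.gapreds ∪ M₂.gapreds

lemma gapreds_subst (M : MA Atom) (σ : ℕ → ℕ) : (M.subst σ).gapreds = M.apreds := by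
  induction M <;>
    simp [MA.subst, MA.map, MA.gapreds, MA.apreds, Atom.subst, *] at *

/-- Satisfaction is monotone in the interpretation, restricted to mentioned predicates. -/
lemma sat_mono_on (I I' : Interp) :
    ∀ (M : MA GAtom), (∀ B s, B.pred ∈ M.gapreds → I B s → I' B s) →
    ∀ t, sat I t M → sat I' t M := by
  intro M
  induction M with
  | top => intro _ t _; trivial
  | bot => intro _ t h; exact h
  | atom A => intro h t hs; exact h A t (by simp [MA.gapreds]) hs
  | diaMinus ρ M ih =>
      rintro h t ⟨t', ht', hm⟩; exact ⟨t', ht', ih h t' hm⟩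
  | diaPlus ρ M ih =>
      rintro h t ⟨t', ht', hm⟩; exact ⟨t', ht', ih h t' hm⟩
  | boxMinus ρ M ih =>
      intro h t hs t' ht'; exact ih h t' (hs t' ht')
  | boxPlus ρ M ih =>
      intro h t hs t' ht'; exact ih h t' (hs t' ht')
  | since ρ M₁ M₂ ih₁ ih₂ =>
      rintro h t ⟨t', ht', hm₂, hm₁⟩
      exact ⟨t', ht', ih₂ (fun B s hb => h B s (Or.inr hb)) t' hm₂,
        fun t'' h1 h2 => ih₁ (fun B s hb => h B s (Or.inl hb)) t'' (hm₁ t'' h1 h2)⟩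
  | untl ρ M₁ M₂ ih₁ ih₂ =>
      rintro h t ⟨t', ht', hm₂, hm₁⟩
      exact ⟨t', ht', ih₂ (fun B s hb => h B s (Or.inr hb)) t' hm₂,
        fun t'' h1 h2 => ih₁ (fun B s hb => h B s (Or.inl hb)) t'' (hm₁ t'' h1 h2)⟩

lemma sat_mono {I I' : Interp} (h : leI I I') (M : MA GAtom) (t : ℚ) :
    sat I t M → sat I' t M :=
  sat_mono_on I I' M (fun B s _ => h B s) t

lemma TP_mono (P : Program) {I I' : Interp} (h : leI I I') : leI (TP P I) (TP P I') := by
  rintro A t (h0 | ⟨r, hr, σ, t0, hb, he⟩)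
  · exact Or.inl (h A t h0)
  · exact Or.inr ⟨r, hr, σ, t0, fun N hN => sat_mono h _ t0 (hb N hN), he⟩

lemma le_canon (P : Program) (I : Interp) : leI I (canon P I) :=
  fun A t h J hIJ _ => hIJ A t h

lemma canon_le {P : Program} {I J : Interp} (h1 : leI I J) (h2 : leI (TP P J) J) :
    leI (canon P I) J :=
  fun A t hc => hc J h1 h2

lemma canon_prefixed (P : Program) (I : Interp) : leI (TP P (canon P I)) (canon P I) := by
  intro A t h J hIJ hTJ
  exact hTJ A t (TP_mono P (canon_le hIJ hTJ) A t h)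

lemma TP_subprog {P P' : Program} (h : P'.rules ⊆ P.rules) (J : Interp) :
    leI (TP P' J) (TP P J) := by
  rintro A t (h0 | ⟨r, hr, rest⟩)
  · exact Or.inl h0
  · exact Or.inr ⟨r, h hr, rest⟩

lemma canon_subprog {P P' : Program} (h : P'.rules ⊆ P.rules) (I : Interp) :
    leI (canon P' I) (canon P I) := by
  intro A t hc J hIJ hTJ
  exact hc J hIJ (fun B s h' => hTJ B s (TP_subprog h J B s h'))

lemma HeadOK.map_ok {α β : Type} {M : MA α} (g : α → β) (h : HeadOK M) :
    HeadOK (M.map g) := by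
  induction h with
  | top => exact .top
  | atom A => exact .atom _
  | boxMinus ρ _ ih => exact .boxMinus ρ ih
  | boxPlus ρ _ ih => exact .boxPlus ρ ih

/-- Any interpretation making all mentioned predicates globally true satisfies
a head-shaped ground metric atom everywhere. -/
lemma sat_of_preds {M : MA GAtom} (h : HeadOK M) (I : Interp)
    (hI : ∀ B s, B.pred ∈ M.gapreds → I B s) : ∀ t, sat I t M := by
  induction h with
  | top => intro t; trivial
  | atom A => intro t; exact hI A t (by simp [MA.gapreds])
  | boxMinus ρ _ ih => intro t t' _; exact ih hI t'
  | boxPlus ρ _ ih => intro t t' _; exact ih hI t'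

lemma headPred_of_gEntails {h : MA GAtom} (hok : HeadOK h) {t t' : ℚ} {A : GAtom}
    (he : gEntails h {t} A {t'}) : A.pred ∈ h.gapreds := by
  refine he (fun B _ => B.pred ∈ h.gapreds) ?_ t' rfl
  intro s _
  exact sat_of_preds hok _ (fun B _ hb => hb) s

lemma headOK_apreds_eq {M : MA Atom} (h : HeadOK M) {p q : ℕ}
    (hp : p ∈ M.apreds) (hq : q ∈ M.apreds) : p = q := by
  induction h with
  | top => simp [MA.apreds] at hp
  | atom A =>
      simp [MA.apreds] at hp hq; omega
  | boxMinus ρ _ ih => exact ih hp hq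
  | boxPlus ρ _ ih => exact ih hp hq

/-- Key claim: atoms of `can(Π,D)` over non-recursive predicates are already in
`can(Π_nr,D)`. -/
lemma nonrec_atoms (P : Program) (D : Dataset) (A : GAtom) (t : ℚ)
    (hnr : ¬ Recursive P A.pred) (h : canon P D.interp A t) :
    canon P.nrFrag D.interp A t := by
  have hsub : P.nrFrag.rules ⊆ P.rules := fun r hr => hr.1
  set Cn := canon P.nrFrag D.interp with hCn
  set Cp := canon P D.interp with hCp
  set J : Interp := fun B s => Cp B s ∧ (¬ Recursive P B.pred → Cn B s) with hJ
  have hJCp : leI J Cp := fun B s hb => hb.1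
  have hDJ : leI D.interp J := fun B s hb =>
    ⟨le_canon P _ B s hb, fun _ => le_canon P.nrFrag _ B s hb⟩
  have hpre : leI (TP P J) J := by
    intro B t' hTP
    constructor
    · exact canon_prefixed P D.interp B t' (TP_mono P hJCp B t' hTP)
    · intro hBnr
      rcases hTP with hJB | ⟨r', hr', σ, t0, hbody, hent⟩
      · exact hJB.2 hBnr
      · -- B.pred is a head predicate of r'
        have hok : HeadOK (r'.head.subst σ) := HeadOK.map_ok _ r'.head_ok
        have hBin : B.pred ∈ r'.headPreds := by
          have := headPred_of_gEntails hok hent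
          rwa [gapreds_subst] at this
        -- r' belongs to the non-recursive fragment
        have hr'nr : r' ∈ P.nrFrag.rules := by
          refine ⟨hr', fun Q hQ => ?_⟩
          have : Q = B.pred := headOK_apreds_eq r'.head_ok hQ hBin
          rwa [this]
        -- all body predicates of r' are non-recursive
        have hbnr : ∀ Q ∈ r'.bodyPreds, ¬ Recursive P Q := by
          rintro Q hQ ⟨R, hcyc, hpath⟩
          exact hBnr ⟨R, hcyc, hpath.tail ⟨r', hr', hQ, hBin⟩⟩
        -- bodies are satisfied in Cn
        have hbodyCn : ∀ N ∈ r'.body, sat Cn t0 (N.subst σ) := by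
          intro N hN
          refine sat_mono_on J Cn (N.subst σ) ?_ t0 (hbody N hN)
          intro B' s hb hJb
          rw [gapreds_subst] at hb
          exact hJb.2 (hbnr B'.pred (Set.mem_biUnion hN hb))
        have : TP P.nrFrag Cn B t' :=
          Or.inr ⟨r', hr'nr, σ, t0, hbodyCn, hent⟩
        exact canon_prefixed P.nrFrag D.interp B t' this
  have : leI Cp J := canon_le hDJ hpre
  exact (this A t h).2 hnr

/-- Lemma 3, Line 10 case: a rule with a non-recursive body atom that is
satisfied nowhere in `𝔍_E` can be deleted without changing the canonical interpretation. -/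
theorem discard_rule_unsatisfied_atom (P : Program) (D E : Dataset) (r : Rule) (M : MA Atom)
    (h1 : leI D.interp E.interp) (h2 : leI E.interp (canon P D.interp))
    (h3 : leI (canon P.nrFrag D.interp) E.interp)
    (hr : r ∈ P.rules) (hM : M ∈ r.body)
    (hMnr : ∀ Q ∈ M.apreds, ¬ Recursive P Q)
    (hunsat : ∀ (σ : ℕ → ℕ) (t : ℚ), ¬ sat E.interp t (M.subst σ)) :
    canon P E.interp = canon (P.erase r) E.interp := by
  have herase : (P.erase r).rules ⊆ P.rules := fun r' hr' => hr'.1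
  have hnrsub : P.nrFrag.rules ⊆ P.rules := fun r' hr' => hr'.1
  set K := canon (P.erase r) E.interp with hK
  -- canon P D.interp is a prefixed point of TP (P.erase r) containing E.interp
  have hKCpD : leI K (canon P D.interp) :=
    canon_le h2 (fun B s hb =>
      canon_prefixed P D.interp B s (TP_subprog herase _ B s hb))
  -- K sends non-recursive atoms into E.interp
  have hKE : ∀ B s, ¬ Recursive P B.pred → K B s → E.interp B s := by
    intro B s hnr hb
    exact h3 B s (nonrec_atoms P D B s hnr (hKCpD B s hb))
  -- K is a prefixed point of TP P
  have hpre : leI (TP P K) K := by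
    rintro B t' (hKB | ⟨r', hr', σ, t0, hbody, hent⟩)
    · exact hKB
    · by_cases hre : r' = r
      · exfalso
        subst hre
        have hsatK : sat K t0 (M.subst σ) := hbody M hM
        have hsatE : sat E.interp t0 (M.subst σ) := by
          refine sat_mono_on K E.interp (M.subst σ) ?_ t0 hsatK
          intro B' s hb hKb
          rw [gapreds_subst] at hb
          exact hKE B' s (hMnr B'.pred hb) hKb
        exact hunsat σ t0 hsatE
      · exact canon_prefixed (P.erase r) E.interp B t'
          (Or.inr ⟨r', ⟨hr', hre⟩, σ, t0, hbody, hent⟩)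
  funext A t
  apply propext
  constructor
  · intro h
    exact canon_le (le_canon (P.erase r) E.interp) hpre A t h
  · intro h
    exact canon_subprog herase E.interp A t h

end DatalogMTL
end

section
/- For every DatalogMTL program Π with non-recursive fragment Π_nr and every dataset D, the canonical interpretations can(Π,D) and can(Π_nr,D) satisfy exactly the same facts P(c)@t for all ground relational atoms P(c) whose predicate P is non-recursive in Π and all time points t ∈ ℚ. -/
namespace DatalogMTL

/-- Predicates mentioned in a ground metric atom. -/
def MA.gpreds : MA GAtom → Set ℕ
  | .top => ∅
  | .bot => ∅
  | .atom A => {A.pred}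
  | .diaMinus _ M => M.gpreds
  | .diaPlus _ M => M.gpreds
  | .boxMinus _ M => M.gpreds
  | .boxPlus _ M => M.gpreds
  | .since _ M₁ M₂ => M₁.gpreds ∪ M₂.gpreds
  | .untl _ M₁ M₂ => M₁.gpreds ∪ M₂.gpreds

lemma gpreds_subst (M : MA Atom) (σ : ℕ → ℕ) : (M.subst σ).gpreds = M.apreds := by
  induction M <;> simp [MA.subst, MA.map, MA.gpreds, MA.apreds, Atom.subst, *] <;>
    simp_all [MA.subst]

lemma sat_congr (M : MA GAtom) {J J' : Interp}
    (h : ∀ B s, B.pred ∈ M.gpreds → (J B s ↔ J' B s)) :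
    ∀ u : ℚ, sat J u M ↔ sat J' u M := by
  induction M with
  | top => intro u; simp [sat]
  | bot => intro u; simp [sat]
  | atom B => intro u; exact h B u (by simp [MA.gpreds])
  | diaMinus ρ M ih =>
      intro u; simp only [sat]
      exact exists_congr fun t' => and_congr_right fun _ => ih h t'
  | diaPlus ρ M ih =>
      intro u; simp only [sat]
      exact exists_congr fun t' => and_congr_right fun _ => ih h t'
  | boxMinus ρ M ih =>
      intro u; simp only [sat]
      exact forall_congr' fun t' => imp_congr_right fun _ => ih h t'
  | boxPlus ρ M ih =>
      intro u; simp only [sat]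
      exact forall_congr' fun t' => imp_congr_right fun _ => ih h t'
  | since ρ M₁ M₂ ih₁ ih₂ =>
      intro u; simp only [sat]
      refine exists_congr fun t' => and_congr_right fun _ => ?_
      refine and_congr (ih₂ (fun B s hB => h B s (Or.inr hB)) t') ?_
      exact forall_congr' fun t'' => forall_congr' fun _ => forall_congr' fun _ =>
        (ih₁ (fun B s hB => h B s (Or.inl hB)) t'')
  | untl ρ M₁ M₂ ih₁ ih₂ =>
      intro u; simp only [sat]
      refine exists_congr fun t' => and_congr_right fun _ => ?_
      refine and_congr (ih₂ (fun B s hB => h B s (Or.inr hB)) t') ?_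
      exact forall_congr' fun t'' => forall_congr' fun _ => forall_congr' fun _ =>
        (ih₁ (fun B s hB => h B s (Or.inl hB)) t'')

lemma headOK_map {α β : Type} (g : α → β) {M : MA α} (h : HeadOK M) :
    HeadOK (M.map g) := by
  induction h with
  | top => exact .top
  | atom B => exact .atom _
  | boxMinus ρ _ ih => exact .boxMinus ρ ih
  | boxPlus ρ _ ih => exact .boxPlus ρ ih

lemma headOK_sat {M : MA GAtom} (h : HeadOK M) :
    ∀ u : ℚ, sat (fun B _ => B.pred ∈ M.gpreds) u M := by
  induction h with
  | top => intro u; trivial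
  | atom B => intro u; simp [sat, MA.gpreds]
  | boxMinus ρ _ ih => intro u t' _; simpa [MA.gpreds] using ih t'
  | boxPlus ρ _ ih => intro u t' _; simpa [MA.gpreds] using ih t'

lemma headOK_preds_sub {α : Type} {M : MA α} (h : HeadOK M)
    (f : α → ℕ) : ∀ p q, p ∈ (M.map (fun a => (⟨f a, []⟩ : GAtom))).gpreds →
      q ∈ (M.map (fun a => (⟨f a, []⟩ : GAtom))).gpreds → p = q := by
  induction h with
  | top => intro p q hp; simp [MA.map, MA.gpreds] at hp
  | atom B => intro p q hp hq; simp [MA.map, MA.gpreds] at hp hq; omega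
  | boxMinus ρ _ ih => intro p q hp hq; exact ih p q hp hq
  | boxPlus ρ _ ih => intro p q hp hq; exact ih p q hp hq

lemma apreds_subsingleton {M : MA Atom} (h : HeadOK M) :
    ∀ p q, p ∈ M.apreds → q ∈ M.apreds → p = q := by
  induction h with
  | top => intro p q hp; simp [MA.apreds] at hp
  | atom B => intro p q hp hq; simp [MA.apreds] at hp hq; omega
  | boxMinus ρ _ ih => intro p q hp hq; exact ih p q hp hq
  | boxPlus ρ _ ih => intro p q hp hq; exact ih p q hp hq

lemma body_nonrec {P : Program} {r : Rule} (hr : r ∈ P.rules) {R : ℕ}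
    (hR : R ∈ r.headPreds) (hnR : ¬ Recursive P R) {Q : ℕ}
    (hQ : Q ∈ r.bodyPreds) : ¬ Recursive P Q := by
  rintro ⟨S, hS, hSQ⟩
  exact hnR ⟨S, hS, hSQ.tail ⟨r, hr, hQ, hR⟩⟩

/-- `can(Π,D)` and `can(Π_nr,D)` satisfy exactly the same facts `P(c)@t`
for all ground relational atoms whose predicate is non-recursive in `Π`. -/
theorem canon_nr_agrees_on_nonrecursive (P : Program) (D : Dataset) (A : GAtom)
    (hA : ¬ Recursive P A.pred) (t : ℚ) :
    canon P D.interp A t ↔ canon P.nrFrag D.interp A t := by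
  constructor
  · -- hard direction
    intro hc J hDJ hpre
    set J' : Interp := fun B s => Recursive P B.pred ∨ J B s with hJ'def
    have hagree : ∀ B s, ¬ Recursive P B.pred → (J B s ↔ J' B s) := by
      intro B s hB
      simp [hJ'def, hB]
    have hJ'pre : leI (TP P J') J' := by
      intro B s hB
      rcases hB with h | ⟨r, hr, σ, u, hbody, hg⟩
      · exact h
      by_cases hrec : Recursive P B.pred
      · exact Or.inl hrec
      · have hok : HeadOK (r.head.subst σ) := headOK_map _ r.head_ok
        have hBp : B.pred ∈ (r.head.subst σ).gpreds :=
          hg (fun B' s' => B'.pred ∈ (r.head.subst σ).gpreds)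
            (fun u' _ => headOK_sat hok u') s rfl
        rw [gpreds_subst] at hBp
        have hhead_nr : ∀ Q ∈ r.headPreds, ¬ Recursive P Q := by
          intro Q hQ
          have := apreds_subsingleton r.head_ok Q B.pred hQ hBp
          rwa [this]
        have hrnr : r ∈ P.nrFrag.rules := ⟨hr, hhead_nr⟩
        have hbody' : ∀ M ∈ r.body, sat J u (M.subst σ) := by
          intro M hM
          refine (sat_congr (M.subst σ) ?_ u).mpr (hbody M hM)
          intro B' s' hB'
          rw [gpreds_subst] at hB'
          refine hagree B' s' (body_nonrec hr hBp hrec ?_)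
          exact Set.mem_biUnion hM hB'
        exact Or.inr (hpre B s (Or.inr ⟨r, hrnr, σ, u, hbody', hg⟩))
    have := hc J' (fun B s h => Or.inr (hDJ B s h)) hJ'pre
    rcases this with h | h
    · exact absurd h hA
    · exact h
  · -- easy direction
    intro hc J hDJ hpre
    refine hc J hDJ ?_
    intro B s h
    rcases h with h | ⟨r, hr, rest⟩
    · exact hpre B s (Or.inl h)
    · exact hpre B s (Or.inr ⟨r, hr.1, rest⟩)

end DatalogMTL
end
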